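/- arXiv:2603.24727 — 8 statements merged into one kernel-verified Lean document; each statement's English description precedes it below -/
import Mathlib

section
/- Let n = (2m+1)k with m,k ≥ 1, and let x_1 ≤ x_2 ≤ ... ≤ x_n be a strictly increasing population. Define the population CDF F_x(x_i) = i/n and, for the quantile sample y = (x_{m+1}, x_{m+1+(2m+1)}, ..., x_{m+1+(2m+1)(k-1)}), the sample CDF F_y(x_i) = (1/k)·#{j : y_j ≤ x_i}. Then the Kolmogorov-Smirnov statistic satisfies max_{1≤i≤n} |F_x(x_i) - F_y(x_i)| = m/n. -/
/-- Population CDF at index `i` (strictly increasing population of size `n`): `i/n`. -/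
noncomputable def popCDF (n i : ℕ) : ℝ := (i : ℝ) / n

/-- Sample CDF at index `i` of the sample with position set `L` and size `k`. -/
noncomputable def sampCDF (k : ℕ) (L : Finset ℕ) (i : ℕ) : ℝ :=
  ((L.filter (fun l => l ≤ i)).card : ℝ) / k

/-- Positions of the quantile sample: `m+1+(2m+1)r` for `r = 0,…,k-1`. -/
def quantileSet (m k : ℕ) : Finset ℕ :=
  (Finset.range k).image (fun r => m + 1 + (2 * m + 1) * r)

lemma card_aux (m k i : ℕ) :
    ((quantileSet m k).filter (fun l => l ≤ i)).card
      = ((Finset.range k).filter (fun r => m + 1 + (2 * m + 1) * r ≤ i)).card := by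
  unfold quantileSet
  rw [Finset.filter_image, Finset.card_image_of_injOn]
  intro a _ b _ h
  simp only at h
  have := Nat.add_left_cancel h
  exact Nat.eq_of_mul_eq_mul_left (by omega) this

lemma card_small (m k i : ℕ) (hi : i ≤ m) :
    ((quantileSet m k).filter (fun l => l ≤ i)).card = 0 := by
  rw [card_aux, Finset.card_eq_zero, Finset.filter_eq_empty_iff]
  intro r _
  omega

lemma card_big (m k i : ℕ) (hmi : m + 1 ≤ i) (hik : i ≤ (2 * m + 1) * k) :
    ((quantileSet m k).filter (fun l => l ≤ i)).card = (i - (m + 1)) / (2 * m + 1) + 1 := by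
  set q := (i - (m + 1)) / (2 * m + 1) with hq
  have hq1 : (2 * m + 1) * q ≤ i - (m + 1) := by
    rw [hq]; exact Nat.mul_div_le _ _
  have hqk : q < k := by
    rw [hq, Nat.div_lt_iff_lt_mul (by omega)]
    calc i - (m + 1) < i := by omega
    _ ≤ (2 * m + 1) * k := hik
    _ = k * (2 * m + 1) := Nat.mul_comm _ _
  rw [card_aux]
  have : (Finset.range k).filter (fun r => m + 1 + (2 * m + 1) * r ≤ i)
      = Finset.range (q + 1) := by
    ext r
    simp only [Finset.mem_filter, Finset.mem_range]
    constructor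
    · rintro ⟨hr, hle⟩
      have h1 : (2 * m + 1) * r ≤ i - (m + 1) := by omega
      have : r ≤ q := by
        rw [hq, Nat.le_div_iff_mul_le (by omega), Nat.mul_comm]; exact h1
      omega
    · intro hr
      have hrq : r ≤ q := by omega
      have : (2 * m + 1) * r ≤ (2 * m + 1) * q := Nat.mul_le_mul_left _ hrq
      exact ⟨by omega, by omega⟩
  rw [this, Finset.card_range]

lemma nat_bounds (m k i : ℕ) (hm : 1 ≤ m) (hi1 : 1 ≤ i) (hik : i ≤ (2 * m + 1) * k) :
    let c := ((quantileSet m k).filter (fun l => l ≤ i)).card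
    (2 * m + 1) * c ≤ i + m ∧ i ≤ (2 * m + 1) * c + m := by
  intro c
  by_cases h : i ≤ m
  · have : c = 0 := card_small m k i h
    simp [this]; omega
  · have hmi : m + 1 ≤ i := by omega
    have hc : c = (i - (m + 1)) / (2 * m + 1) + 1 := card_big m k i hmi hik
    set q := (i - (m + 1)) / (2 * m + 1) with hq
    have hdm : (2 * m + 1) * q + (i - (m + 1)) % (2 * m + 1) = i - (m + 1) := by
      rw [hq]; exact Nat.div_add_mod _ _
    have hmod : (i - (m + 1)) % (2 * m + 1) < 2 * m + 1 := Nat.mod_lt _ (by omega)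
    have hexp : (2 * m + 1) * c = (2 * m + 1) * q + (2 * m + 1) := by
      rw [hc]; ring
    omega


/-- The KS statistic of the quantile sample equals `m/n`:
the pointwise deviation is at most `m/n` and this bound is attained. -/
theorem stmt0 (m k n : ℕ) (hm : 1 ≤ m) (hk : 1 ≤ k) (hn : n = (2 * m + 1) * k)
    (x : ℕ → ℝ) (hx : StrictMonoOn x ↑(Finset.Icc 1 n)) :
    (∀ i ∈ Finset.Icc 1 n,
        |popCDF n i - sampCDF k (quantileSet m k) i| ≤ (m : ℝ) / n) ∧
    (∃ i ∈ Finset.Icc 1 n,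
        |popCDF n i - sampCDF k (quantileSet m k) i| = (m : ℝ) / n) := by
  have hn0 : 0 < n := by rw [hn]; positivity
  have hnR : (0:ℝ) < n := by exact_mod_cast hn0
  have hkR : (0:ℝ) < k := by exact_mod_cast hk
  have hcast : (n:ℝ) = (2 * m + 1) * k := by rw [hn]; push_cast; ring
  constructor
  · intro i hi
    simp only [Finset.mem_Icc] at hi
    obtain ⟨hb1, hb2⟩ := nat_bounds m k i hm hi.1 (hn ▸ hi.2)
    set c := ((quantileSet m k).filter (fun l => l ≤ i)).card with hc
    have key : popCDF n i - sampCDF k (quantileSet m k) i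
        = ((i:ℝ) - (2 * m + 1) * c) / n := by
      rw [popCDF, sampCDF, ← hc]
      field_simp
      rw [hcast]; ring
    rw [key, abs_div, abs_of_pos hnR, div_le_div_iff_of_pos_right hnR]
    rw [abs_le]
    constructor
    · have : ((2:ℝ) * m + 1) * c ≤ i + m := by exact_mod_cast hb1
      linarith
    · have : (i:ℝ) ≤ (2 * m + 1) * c + m := by exact_mod_cast hb2
      linarith
  · refine ⟨m + 1, ?_, ?_⟩
    · simp only [Finset.mem_Icc]
      have : 2 * m + 1 ≤ (2 * m + 1) * k := Nat.le_mul_of_pos_right _ hk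
      omega
    · have hc : ((quantileSet m k).filter (fun l => l ≤ m + 1)).card = 1 := by
        rw [card_big m k (m+1) le_rfl (by nlinarith), Nat.sub_self, Nat.zero_div]
      rw [popCDF, sampCDF, hc]
      have : ((m:ℝ) + 1) / n - 1 / k = -(m / n) := by
        field_simp
        rw [hcast]; ring
      push_cast
      rw [this, abs_neg, abs_of_nonneg (by positivity)]
end

section
/- Let n = (2m+1)k with m,k ≥ 1, and let x_1 < x_2 < ... < x_n be a strictly increasing population. Let y be the quantile sample consisting of the items at positions m+1+(2m+1)(r-1) for r = 1,...,k. Then for every other sample y' (a k-element subset of positions) different from the set of quantile positions, KS(x,y') > KS(x,y) = m/n. -/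
/-- The Kolmogorov–Smirnov statistic: `max_{1 ≤ i ≤ n} |F_x(x_i) - F_L(x_i)|`. -/
noncomputable def KSstat (n k : ℕ) (L : Finset ℕ) : ℝ :=
  ⨆ i : (Finset.Icc 1 n), |popCDF n i - sampCDF k L i|

lemma quantile_inj (m : ℕ) : Function.Injective (fun r => m + 1 + (2 * m + 1) * r) := by
  intro a b h
  simp only at h
  exact Nat.eq_of_mul_eq_mul_left (by omega) (Nat.add_left_cancel h)

lemma quantile_count (m k i : ℕ) :
    ((quantileSet m k).filter (fun l => l ≤ i)).card
      = min ((i + m) / (2 * m + 1)) k := by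
  classical
  unfold quantileSet
  rw [Finset.filter_image, Finset.card_image_of_injective _ (quantile_inj m)]
  have h : (Finset.range k).filter (fun r => m + 1 + (2 * m + 1) * r ≤ i)
      = Finset.range (min ((i + m) / (2 * m + 1)) k) := by
    ext a
    simp only [Finset.mem_filter, Finset.mem_range, lt_min_iff]
    have hdiv : a + 1 ≤ (i + m) / (2 * m + 1) ↔ (a + 1) * (2 * m + 1) ≤ i + m :=
      Nat.le_div_iff_mul_le (by omega)
    have he : (a + 1) * (2 * m + 1) = (2 * m + 1) * a + (2 * m + 1) := by ring
    constructor
    · rintro ⟨ha, hb⟩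
      exact ⟨hdiv.mpr (by omega), ha⟩
    · rintro ⟨ha, hb⟩
      have := hdiv.mp ha
      exact ⟨hb, by omega⟩
  rw [h, Finset.card_range]

lemma quantile_card (m k : ℕ) : (quantileSet m k).card = k := by
  classical
  unfold quantileSet
  rw [Finset.card_image_of_injective _ (quantile_inj m), Finset.card_range]

/-- bounds for the quantile count -/
lemma quantile_bounds (m k n i : ℕ) (hk : 1 ≤ k) (hn : n = (2 * m + 1) * k)
    (hi : i ≤ n) :
    (2 * m + 1) * ((quantileSet m k).filter (fun l => l ≤ i)).card ≤ i + m ∧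
    i ≤ (2 * m + 1) * ((quantileSet m k).filter (fun l => l ≤ i)).card + m := by
  rw [quantile_count]
  have hq1 : (2 * m + 1) * ((i + m) / (2 * m + 1)) + (i + m) % (2 * m + 1) = i + m :=
    Nat.div_add_mod _ _
  have hq2 : (i + m) % (2 * m + 1) < 2 * m + 1 := Nat.mod_lt _ (by omega)
  rcases le_total ((i + m) / (2 * m + 1)) k with h | h
  · rw [min_eq_left h]
    omega
  · rw [min_eq_right h]
    have h1 : (2 * m + 1) * k ≤ (2 * m + 1) * ((i + m) / (2 * m + 1)) :=
      Nat.mul_le_mul_left _ h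
    omega

/-- forcing lemma: if all deviations are at most m, the sample is the quantile sample. -/
lemma forcing (m k n : ℕ) (hm : 1 ≤ m) (hk : 1 ≤ k) (hn : n = (2 * m + 1) * k)
    (L : Finset ℕ)
    (h : ∀ i, 1 ≤ i → i ≤ n →
      (2 * m + 1) * (L.filter (fun l => l ≤ i)).card ≤ i + m ∧
      i ≤ (2 * m + 1) * (L.filter (fun l => l ≤ i)).card + m) :
    quantileSet m k ⊆ L := by
  classical
  intro a ha
  unfold quantileSet at ha
  obtain ⟨r, hr, rfl⟩ := Finset.mem_image.mp ha
  rw [Finset.mem_range] at hr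
  set q := m + 1 + (2 * m + 1) * r with hqdef
  have hrm : (2 * m + 1) * (r + 1) ≤ (2 * m + 1) * k := Nat.mul_le_mul_left _ hr
  have hre : (2 * m + 1) * (r + 1) = (2 * m + 1) * r + (2 * m + 1) := by ring
  have hq2 : q ≤ n := by rw [hqdef, hn]; linarith
  have hq1 : 1 ≤ q := by omega
  have hb1 := h q hq1 hq2
  have hb2 := h (m + (2 * m + 1) * r) (by omega) (by omega)
  set c1 := (L.filter (fun l => l ≤ q)).card with hc1
  set c2 := (L.filter (fun l => l ≤ m + (2 * m + 1) * r)).card with hc2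
  -- c1 ≥ r + 1
  have hc1ge : r + 1 ≤ c1 := by
    by_contra hcon
    push_neg at hcon
    have : c1 ≤ r := by omega
    have h1 : (2 * m + 1) * c1 ≤ (2 * m + 1) * r := Nat.mul_le_mul_left _ this
    have := hb1.2
    omega
  -- c2 ≤ r
  have hc2le : c2 ≤ r := by
    by_contra hcon
    push_neg at hcon
    have h1 : (2 * m + 1) * (r + 1) ≤ (2 * m + 1) * c2 := Nat.mul_le_mul_left _ hcon
    have := hb2.1
    omega
  by_contra hnotmem
  have hfe : L.filter (fun l => l ≤ q) = L.filter (fun l => l ≤ m + (2 * m + 1) * r) := by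
    ext l
    simp only [Finset.mem_filter, and_congr_right_iff]
    intro hl
    have hne : l ≠ q := by rintro rfl; exact hnotmem hl
    omega
  rw [hc1, hfe, ← hc2] at hc1ge
  omega

/-- Every sample different from the quantile sample has strictly larger
KS statistic, and the quantile sample has KS statistic `m/n`. -/
theorem stmt1 (m k n : ℕ) (hm : 1 ≤ m) (hk : 1 ≤ k) (hn : n = (2 * m + 1) * k)
    (x : ℕ → ℝ) (hx : StrictMonoOn x ↑(Finset.Icc 1 n))
    (L : Finset ℕ) (hsub : L ⊆ Finset.Icc 1 n) (hcard : L.card = k)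
    (hne : L ≠ quantileSet m k) :
    KSstat n k L > KSstat n k (quantileSet m k) ∧
    KSstat n k (quantileSet m k) = (m : ℝ) / n := by
  classical
  have hn0 : 0 < n := by
    rw [hn]; exact Nat.mul_pos (by omega) hk
  have hnR : (0 : ℝ) < (n : ℝ) := by exact_mod_cast hn0
  have hkR : (0 : ℝ) < (k : ℝ) := by exact_mod_cast hk
  have hmn : m ≤ n := by
    have : 2 * m + 1 ≤ (2 * m + 1) * k := Nat.le_mul_of_pos_right _ hk
    omega
  haveI hnemp : Nonempty ↥(Finset.Icc 1 n) :=
    ⟨⟨1, Finset.mem_Icc.mpr ⟨le_refl 1, hn0⟩⟩⟩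
  -- the key formula for the deviation
  have hdiff : ∀ (L' : Finset ℕ) (i : ℕ),
      |popCDF n i - sampCDF k L' i|
        = |(i : ℝ) - (2 * m + 1) * ((L'.filter (fun l => l ≤ i)).card : ℝ)| / n := by
    intro L' i
    unfold popCDF sampCDF
    have hc : ((L'.filter (fun l => l ≤ i)).card : ℝ) / k
        = ((2 * m + 1) * ((L'.filter (fun l => l ≤ i)).card : ℝ)) / n := by
      rw [hn]
      push_cast
      rw [mul_div_mul_left _ _ (show (2 * (m : ℝ) + 1) ≠ 0 by positivity)]
    rw [hc, div_sub_div_same, abs_div, abs_of_pos hnR]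
  -- pointwise bound for the quantile sample
  have hQpt : ∀ i : ↥(Finset.Icc 1 n),
      |popCDF n ↑i - sampCDF k (quantileSet m k) ↑i| ≤ (m : ℝ) / n := by
    intro j
    have hi := Finset.mem_Icc.mp j.2
    rw [hdiff]
    apply (div_le_div_iff_of_pos_right hnR).mpr
    rw [abs_le]
    obtain ⟨hA, hB⟩ := quantile_bounds m k n (j : ℕ) hk hn hi.2
    constructor
    · have h5 : (2 * (m : ℝ) + 1) * ↑((quantileSet m k).filter (fun l => l ≤ (j : ℕ))).card ≤ ((j : ℕ) : ℝ) + m := by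
        exact_mod_cast hA
      linarith
    · have h5 : ((j : ℕ) : ℝ) ≤ (2 * (m : ℝ) + 1) * ↑((quantileSet m k).filter (fun l => l ≤ (j : ℕ))).card + m := by
        exact_mod_cast hB
      linarith
  have hbdd : ∀ (L' : Finset ℕ),
      BddAbove (Set.range (fun i : ↥(Finset.Icc 1 n) =>
        |popCDF n ↑i - sampCDF k L' ↑i|)) :=
    fun L' => (Set.finite_range _).bddAbove
  have hQle : KSstat n k (quantileSet m k) ≤ (m : ℝ) / n := ciSup_le hQpt
  have hQge : (m : ℝ) / n ≤ KSstat n k (quantileSet m k) := by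
    have hmem : m ∈ Finset.Icc 1 n := Finset.mem_Icc.mpr ⟨hm, hmn⟩
    have hval : |popCDF n m - sampCDF k (quantileSet m k) m| = (m : ℝ) / n := by
      rw [hdiff]
      have hc : ((quantileSet m k).filter (fun l => l ≤ m)).card = 0 := by
        rw [quantile_count]
        rw [Nat.div_eq_of_lt (by omega : m + m < 2 * m + 1)]
        simp
      rw [hc]
      push_cast
      rw [mul_zero, sub_zero, abs_of_nonneg (by positivity)]
    calc (m : ℝ) / n = |popCDF n ↑(⟨m, hmem⟩ : ↥(Finset.Icc 1 n))
            - sampCDF k (quantileSet m k) ↑(⟨m, hmem⟩ : ↥(Finset.Icc 1 n))| := hval.symm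
      _ ≤ KSstat n k (quantileSet m k) := le_ciSup (hbdd _) _
  have hQeq : KSstat n k (quantileSet m k) = (m : ℝ) / n := le_antisymm hQle hQge
  refine ⟨?_, hQeq⟩
  rw [hQeq]
  by_contra hcon
  push_neg at hcon
  -- hcon : KSstat n k L ≤ m / n
  have hpt : ∀ i, 1 ≤ i → i ≤ n →
      (2 * m + 1) * (L.filter (fun l => l ≤ i)).card ≤ i + m ∧
      i ≤ (2 * m + 1) * (L.filter (fun l => l ≤ i)).card + m := by
    intro i h1 h2
    have hmem : i ∈ Finset.Icc 1 n := Finset.mem_Icc.mpr ⟨h1, h2⟩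
    have hle : |popCDF n i - sampCDF k L i| ≤ KSstat n k L :=
      le_ciSup (hbdd L) (⟨i, hmem⟩ : ↥(Finset.Icc 1 n))
    rw [hdiff] at hle
    have h3 : |(i : ℝ) - (2 * m + 1) * ((L.filter (fun l => l ≤ i)).card : ℝ)| / n
        ≤ (m : ℝ) / n := le_trans hle hcon
    have h4 : |(i : ℝ) - (2 * m + 1) * ((L.filter (fun l => l ≤ i)).card : ℝ)| ≤ m :=
      (div_le_div_iff_of_pos_right hnR).mp h3
    rw [abs_le] at h4
    constructor
    · have : (2 * (m : ℝ) + 1) * ((L.filter (fun l => l ≤ i)).card : ℝ) ≤ i + m := by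
        linarith [h4.1]
      exact_mod_cast this
    · have : (i : ℝ) ≤ (2 * (m : ℝ) + 1) * ((L.filter (fun l => l ≤ i)).card : ℝ) + m := by
        linarith [h4.2]
      exact_mod_cast this
  have hsubq : quantileSet m k ⊆ L := forcing m k n hm hk hn L hpt
  have heq : quantileSet m k = L :=
    Finset.eq_of_subset_of_card_le hsubq (by rw [hcard, quantile_card])
  exact hne heq.symm
end

section
/- Let n = (2m+1)k with m,k ≥ 1, and let x_1 < ... < x_n be a strictly increasing population. The L1 statistic of the quantile sample y (positions m+1+(2m+1)(r-1), r = 1,...,k) equals L1(x,y) = (1/n)·∑_{i=1}^n |F_x(x_i) - F_y(x_i)| = m(m+1)/(n(2m+1)). -/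
/-- The L1 statistic: `(1/n) ∑_{i=1}^n |F_x(x_i) - F_L(x_i)|`. -/
noncomputable def L1stat (n k : ℕ) (L : Finset ℕ) : ℝ :=
  (1 / (n : ℝ)) * ∑ i ∈ Finset.Icc 1 n, |popCDF n i - sampCDF k L i|

lemma gaussR (N : ℕ) : ∑ j ∈ Finset.range N, ((j : ℝ) + 1) = N * (N + 1) / 2 := by
  induction N with
  | zero => simp
  | succ n ih => rw [Finset.sum_range_succ, ih]; push_cast; ring

lemma quantile_card_s2 (m k q j : ℕ) (hq : q < k) (hj : j < 2 * m + 1) :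
    ((quantileSet m k).filter (fun l => l ≤ (2 * m + 1) * q + j + 1)).card
      = q + (if m ≤ j then 1 else 0) := by
  classical
  have hinj : Function.Injective (fun r : ℕ => m + 1 + (2 * m + 1) * r) := by
    intro a b hab
    simp only at hab
    have h2 : (2 * m + 1) * a = (2 * m + 1) * b := by linarith
    exact Nat.eq_of_mul_eq_mul_left (by omega) h2
  rw [quantileSet, Finset.filter_image, Finset.card_image_of_injective _ hinj]
  have hset : (Finset.range k).filter
        (fun r => m + 1 + (2 * m + 1) * r ≤ (2 * m + 1) * q + j + 1)
      = Finset.range (q + (if m ≤ j then 1 else 0)) := by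
    ext r
    simp only [Finset.mem_filter, Finset.mem_range]
    constructor
    · rintro ⟨hrk, hcond⟩
      by_contra hc
      push_neg at hc
      by_cases hmj : m ≤ j
      · simp only [if_pos hmj] at hc
        have h2 : (2 * m + 1) * (q + 1) ≤ (2 * m + 1) * r := Nat.mul_le_mul_left _ hc
        rw [Nat.mul_add, Nat.mul_one] at h2
        linarith
      · simp only [if_neg hmj] at hc
        push_neg at hmj
        have h2 : (2 * m + 1) * q ≤ (2 * m + 1) * r := Nat.mul_le_mul_left _ (by omega)
        linarith
    · intro hr
      by_cases hmj : m ≤ j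
      · simp only [if_pos hmj] at hr
        have h2 : (2 * m + 1) * r ≤ (2 * m + 1) * q := Nat.mul_le_mul_left _ (by omega)
        exact ⟨by omega, by linarith⟩
      · simp only [if_neg hmj] at hr
        push_neg at hmj
        have h2 : (2 * m + 1) * (r + 1) ≤ (2 * m + 1) * q := Nat.mul_le_mul_left _ (by omega)
        rw [Nat.mul_add, Nat.mul_one] at h2
        exact ⟨by omega, by linarith⟩
  rw [hset, Finset.card_range]

/-- The L1 statistic of the quantile sample equals `m(m+1)/(n(2m+1))`. -/
theorem stmt2 (m k n : ℕ) (hm : 1 ≤ m) (hk : 1 ≤ k) (hn : n = (2 * m + 1) * k)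
    (x : ℕ → ℝ) (hx : StrictMonoOn x ↑(Finset.Icc 1 n)) :
    L1stat n k (quantileSet m k) =
      ((m : ℝ) * (m + 1)) / ((n : ℝ) * (2 * m + 1)) := by
  classical
  subst hn
  have hk0 : (k : ℝ) ≠ 0 := by positivity
  have hM0 : (2 * (m : ℝ) + 1) ≠ 0 := by positivity
  set f : ℕ → ℝ := fun i =>
    |popCDF ((2 * m + 1) * k) i - sampCDF k (quantileSet m k) i| with hf
  have hsum : ∑ i ∈ Finset.Icc 1 ((2 * m + 1) * k), f i
      = ∑ p ∈ Finset.range k ×ˢ Finset.range (2 * m + 1),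
          f ((2 * m + 1) * p.1 + p.2 + 1) := by
    refine Finset.sum_nbij' (fun i => (((i - 1) / (2 * m + 1), (i - 1) % (2 * m + 1)) : ℕ × ℕ))
      (fun p => (2 * m + 1) * p.1 + p.2 + 1) ?_ ?_ ?_ ?_ ?_
    · intro i hi
      simp only [Finset.mem_Icc] at hi
      simp only [Finset.mem_product, Finset.mem_range]
      constructor
      · rw [Nat.div_lt_iff_lt_mul (by omega)]
        have : (2 * m + 1) * k = k * (2 * m + 1) := Nat.mul_comm _ _
        omega
      · exact Nat.mod_lt _ (by omega)
    · intro p hp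
      simp only [Finset.mem_product, Finset.mem_range] at hp
      simp only [Finset.mem_Icc]
      have h2 : (2 * m + 1) * (p.1 + 1) ≤ (2 * m + 1) * k := Nat.mul_le_mul_left _ (by omega)
      rw [Nat.mul_add, Nat.mul_one] at h2
      constructor
      · omega
      · linarith [hp.2]
    · intro i hi
      simp only [Finset.mem_Icc] at hi
      show (2 * m + 1) * ((i - 1) / (2 * m + 1)) + (i - 1) % (2 * m + 1) + 1 = i
      rw [Nat.div_add_mod]
      omega
    · intro p hp
      simp only [Finset.mem_product, Finset.mem_range] at hp
      simp only [Nat.add_sub_cancel, Nat.mul_add_div (show 0 < 2 * m + 1 by omega),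
        Nat.mul_add_mod, Nat.div_eq_of_lt hp.2, Nat.mod_eq_of_lt hp.2, Nat.add_zero]
    · intro i hi
      simp only [Finset.mem_Icc] at hi
      show f i = f ((2 * m + 1) * ((i - 1) / (2 * m + 1)) + (i - 1) % (2 * m + 1) + 1)
      rw [Nat.div_add_mod]
      congr 1
      omega
  rw [L1stat, hsum, Finset.sum_product]
  have hinner : ∀ q ∈ Finset.range k,
      ∑ j ∈ Finset.range (2 * m + 1), f ((2 * m + 1) * q + j + 1)
        = (m : ℝ) * (m + 1) / ((2 * m + 1) * k) := by
    intro q hq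
    rw [Finset.mem_range] at hq
    have hterm : ∀ j ∈ Finset.range (2 * m + 1), f ((2 * m + 1) * q + j + 1)
        = (if j < m then (j : ℝ) + 1 else 2 * m - j) / ((2 * m + 1) * k) := by
      intro j hj
      rw [Finset.mem_range] at hj
      rw [hf]
      simp only [popCDF, sampCDF, quantile_card_s2 m k q j hq hj]
      by_cases hjm : j < m
      · rw [if_neg (show ¬ m ≤ j by omega), if_pos hjm]
        have heq : (((2 * m + 1) * q + j + 1 : ℕ) : ℝ) / (((2 * m + 1) * k : ℕ) : ℝ)
            - ((q + 0 : ℕ) : ℝ) / k = ((j : ℝ) + 1) / ((2 * m + 1) * k) := by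
          push_cast
          field_simp
          ring
        rw [heq, abs_of_nonneg (by positivity)]
      · rw [if_pos (by omega), if_neg hjm]
        have heq : (((2 * m + 1) * q + j + 1 : ℕ) : ℝ) / (((2 * m + 1) * k : ℕ) : ℝ)
            - ((q + 1 : ℕ) : ℝ) / k = -((2 * (m : ℝ) - j) / ((2 * m + 1) * k)) := by
          push_cast
          field_simp
          ring
        rw [heq, abs_neg, abs_of_nonneg]
        apply div_nonneg _ (by positivity)
        have : (j : ℝ) ≤ 2 * m := by exact_mod_cast Nat.le_of_lt_succ hj
        linarith
    rw [Finset.sum_congr rfl hterm, ← Finset.sum_div]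
    have hsplit : ∑ j ∈ Finset.range (2 * m + 1), (if j < m then (j : ℝ) + 1 else 2 * m - j)
        = (m : ℝ) * (m + 1) := by
      rw [Finset.range_eq_Ico, ← Finset.sum_Ico_consecutive _ (Nat.zero_le m) (by omega : m ≤ 2 * m + 1)]
      have h1 : ∑ j ∈ Finset.Ico 0 m, (if j < m then (j : ℝ) + 1 else 2 * m - j)
          = ∑ j ∈ Finset.range m, ((j : ℝ) + 1) := by
        rw [← Finset.range_eq_Ico]
        exact Finset.sum_congr rfl fun j hj => if_pos (Finset.mem_range.mp hj)
      have h2 : ∑ j ∈ Finset.Ico m (2 * m + 1), (if j < m then (j : ℝ) + 1 else 2 * m - j)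
          = ∑ t ∈ Finset.range (m + 1), ((m : ℝ) - t) := by
        rw [Finset.sum_Ico_eq_sum_range]
        apply Finset.sum_congr (by congr 1; omega)
        intro t _
        rw [if_neg (by omega)]
        push_cast
        ring
      have h3 : ∑ t ∈ Finset.range (m + 1), ((m : ℝ) - t)
          = (m + 1) * (m + 1) - ∑ t ∈ Finset.range (m + 1), ((t : ℝ) + 1) := by
        rw [Finset.sum_sub_distrib, Finset.sum_add_distrib, Finset.sum_const, Finset.sum_const,
          Finset.card_range, nsmul_eq_mul, nsmul_eq_mul]
        push_cast
        ring
      rw [h1, h2, h3, gaussR, gaussR]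
      push_cast
      ring
    rw [hsplit]
  rw [Finset.sum_congr rfl hinner, Finset.sum_const, Finset.card_range, nsmul_eq_mul]
  push_cast
  field_simp
end

section
/- Let n = (2m+1)k, x_1 < ... < x_n strictly increasing, and let y' be any sample of size k given by positions ℓ_1 < ... < ℓ_k that is not equal to the quantile positions (m+1, m+1+(2m+1), ..., m+1+(2m+1)(k-1)). Then L1(x,y') > m(m+1)/(n(2m+1)), i.e., the quantile sample is the unique minimizer of the L1 statistic. -/
namespace Stmt4Aux

/-- count of elements of `S` that are `≤ i` -/
def cnt (S : Finset ℕ) (i : ℕ) : ℕ := (S.filter (fun l => l ≤ i)).card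

/-- quantile count function -/
def qq (m i : ℕ) : ℕ := (i + m) / (2 * m + 1)

/-- quantile "walk" value -/
def bb (m i : ℕ) : ℤ := (i : ℤ) - (2 * m + 1) * qq m i

lemma bb_abs_le (m i : ℕ) : |bb m i| ≤ m := by
  unfold bb qq
  set d := (i + m) / (2 * m + 1) with hd
  set r := (i + m) % (2 * m + 1) with hr
  have h1 : (2 * m + 1) * d + r = i + m := Nat.div_add_mod (i + m) (2 * m + 1)
  have h2 : r < 2 * m + 1 := Nat.mod_lt _ (by omega)
  have h1' : ((2 * m + 1 : ℕ) : ℤ) * (d : ℤ) + (r : ℤ) = (i : ℤ) + (m : ℤ) := by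
    exact_mod_cast congrArg (Nat.cast : ℕ → ℤ) h1
  have key : (i : ℤ) - (2 * (m : ℤ) + 1) * (d : ℤ) = (r : ℤ) - (m : ℤ) := by
    push_cast at h1'
    linarith
  rw [key, abs_le]
  constructor <;> omega

lemma abs_ge {N a b : ℤ} (hN : 0 < N) (hb : 2 * |b| < N) (hdvd : N ∣ a - b) :
    |b| ≤ |a| ∧ (a ≠ b → |b| + 1 ≤ |a|) := by
  obtain ⟨t, ht⟩ := hdvd
  rcases eq_or_ne t 0 with rfl | htne
  · have : a = b := by omega
    subst this
    exact ⟨le_rfl, fun h => absurd rfl h⟩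
  · have h1 : N ≤ |N * t| := by
      rw [abs_mul, abs_of_pos hN]
      nlinarith [Int.one_le_abs (by exact htne : t ≠ 0), abs_nonneg t]
    have h2 : |a - b| ≤ |a| + |b| := abs_sub a b
    rw [ht] at h2
    have : |b| + 1 ≤ |a| := by omega
    exact ⟨by omega, fun _ => this⟩

lemma qq_le (m k i : ℕ) (hik : i ≤ (2 * m + 1) * k) : qq m i ≤ k := by
  unfold qq
  have : (i + m) / (2 * m + 1) < k + 1 := by
    rw [Nat.div_lt_iff_lt_mul (by omega)]
    nlinarith
  omega

lemma cnt_quantile (m k i : ℕ) (hik : i ≤ (2 * m + 1) * k) :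
    cnt (quantileSet m k) i = qq m i := by
  unfold cnt quantileSet
  have hinj : Function.Injective (fun r => m + 1 + (2 * m + 1) * r) := by
    intro a b h
    simp only at h
    have h' : (2 * m + 1) * a = (2 * m + 1) * b := by omega
    exact Nat.eq_of_mul_eq_mul_left (by omega) h'
  rw [Finset.filter_image, Finset.card_image_of_injective _ hinj]
  have hiff : ∀ r, (m + 1 + (2 * m + 1) * r ≤ i) ↔ r < qq m i := by
    intro r
    unfold qq
    rw [Nat.lt_iff_add_one_le, Nat.le_div_iff_mul_le (by omega : 0 < 2 * m + 1)]
    constructor <;> intro h <;> nlinarith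
  have heq : (Finset.range k).filter (fun r => m + 1 + (2 * m + 1) * r ≤ i)
      = Finset.range (qq m i) := by
    ext r
    simp only [Finset.mem_filter, Finset.mem_range, hiff]
    have := qq_le m k i hik
    omega
  rw [heq, Finset.card_range]

lemma cnt_step (S : Finset ℕ) (l : ℕ) (hl : 1 ≤ l) :
    cnt S l = cnt S (l - 1) + (if l ∈ S then 1 else 0) := by
  unfold cnt
  have hsplit : S.filter (fun x => x ≤ l)
      = S.filter (fun x => x ≤ l - 1) ∪ S.filter (fun x => x = l) := by
    ext y
    simp only [Finset.mem_filter, Finset.mem_union]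
    by_cases hyS : y ∈ S <;> simp [hyS] <;> omega
  have hdisj : Disjoint (S.filter (fun x => x ≤ l - 1)) (S.filter (fun x => x = l)) := by
    rw [Finset.disjoint_left]
    intro y hy hy'
    simp only [Finset.mem_filter] at hy hy'
    omega
  rw [hsplit, Finset.card_union_of_disjoint hdisj]
  congr 1
  rw [Finset.filter_eq' S l]
  split_ifs <;> simp

lemma set_eq_of_cnt_eq (S T : Finset ℕ) (n : ℕ) (hS : S ⊆ Finset.Icc 1 n)
    (hT : T ⊆ Finset.Icc 1 n) (h : ∀ i ∈ Finset.Icc 1 n, cnt S i = cnt T i) :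
    S = T := by
  have h0 : ∀ U : Finset ℕ, U ⊆ Finset.Icc 1 n → cnt U 0 = 0 := by
    intro U hU
    unfold cnt
    rw [Finset.card_eq_zero, Finset.filter_eq_empty_iff]
    intro y hy
    have := hU hy
    simp only [Finset.mem_Icc] at this
    omega
  have h' : ∀ i, i ≤ n → cnt S i = cnt T i := by
    intro i hi
    rcases Nat.eq_zero_or_pos i with rfl | hpos
    · rw [h0 S hS, h0 T hT]
    · exact h i (by simp only [Finset.mem_Icc]; omega)
  ext l
  by_cases hl : l ∈ Finset.Icc 1 n
  · simp only [Finset.mem_Icc] at hl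
    have e1 := cnt_step S l hl.1
    have e2 := cnt_step T l hl.1
    have e3 := h' l hl.2
    have e4 := h' (l - 1) (by omega)
    constructor <;> intro hmem <;> by_contra hnot <;>
      simp only [hmem, hnot, if_true, if_false] at e1 e2 <;> omega
  · constructor <;> intro hmem
    · exact absurd (hS hmem) hl
    · exact absurd (hT hmem) hl

lemma ioc_sum (m : ℕ) : (∑ j ∈ Finset.Ioc 0 m, (j : ℤ)) * 2 = m * (m + 1) := by
  induction m with
  | zero => simp
  | succ p ih =>
    rw [Finset.sum_Ioc_succ_top (Nat.zero_le _)]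
    push_cast
    push_cast at ih
    linarith

lemma block_sum (m : ℕ) : ∑ j ∈ Finset.Ioc 0 (2 * m + 1), |bb m j| = m * (m + 1) := by
  rw [← Finset.sum_Ioc_consecutive _ (Nat.zero_le m) (by omega : m ≤ 2 * m + 1)]
  have e1 : ∑ j ∈ Finset.Ioc 0 m, |bb m j| = ∑ j ∈ Finset.Ioc 0 m, (j : ℤ) := by
    apply Finset.sum_congr rfl
    intro j hj
    simp only [Finset.mem_Ioc] at hj
    have hq : qq m j = 0 := Nat.div_eq_of_lt (by omega)
    unfold bb
    rw [hq]
    push_cast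
    rw [mul_zero, sub_zero]
    exact abs_of_nonneg (by positivity)
  have e2 : ∑ j ∈ Finset.Ioc m (2 * m + 1), |bb m j|
      = ∑ j ∈ Finset.Ioc 0 m, (j : ℤ) := by
    have e2' : ∑ j ∈ Finset.Ioc m (2 * m + 1), |bb m j|
        = ∑ j ∈ Finset.Icc 0 m, (j : ℤ) := by
      apply Finset.sum_nbij' (i := fun j => 2 * m + 1 - j) (j := fun s => 2 * m + 1 - s)
      · intro a ha
        simp only [Finset.mem_Ioc] at ha
        simp only [Finset.mem_Icc]
        omega
      · intro a ha
        simp only [Finset.mem_Icc] at ha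
        simp only [Finset.mem_Ioc]
        omega
      · intro a ha
        simp only [Finset.mem_Ioc] at ha
        omega
      · intro a ha
        simp only [Finset.mem_Icc] at ha
        omega
      · intro j hj
        simp only [Finset.mem_Ioc] at hj
        have hq : qq m j = 1 := by
          unfold qq
          exact Nat.div_eq_of_lt_le (by omega) (by omega)
        unfold bb
        rw [hq]
        have hc : ((2 * m + 1 - j : ℕ) : ℤ) = 2 * (m : ℤ) + 1 - (j : ℤ) := by
          push_cast [Nat.cast_sub (by omega : j ≤ 2 * m + 1)]
          ring
        rw [hc, abs_of_nonpos (by push_cast; omega)]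
        push_cast
        ring
    rw [e2', show Finset.Icc 0 m = insert 0 (Finset.Ioc 0 m) by ext a; simp only [Finset.mem_Icc, Finset.mem_insert, Finset.mem_Ioc]; omega,
      Finset.sum_insert (by simp), Nat.cast_zero, zero_add]
  rw [e1, e2]
  have := ioc_sum m
  push_cast at this ⊢
  linarith

lemma total_sum (m k : ℕ) :
    ∑ i ∈ Finset.Ioc 0 ((2 * m + 1) * k), |bb m i| = (k : ℤ) * (m * (m + 1)) := by
  induction k with
  | zero => simp
  | succ p ih =>
    have hsplit : (2 * m + 1) * (p + 1) = (2 * m + 1) * p + (2 * m + 1) := by ring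
    rw [hsplit, ← Finset.sum_Ioc_consecutive _ (Nat.zero_le _)
      (by omega : (2 * m + 1) * p ≤ (2 * m + 1) * p + (2 * m + 1)), ih]
    have e : ∑ j ∈ Finset.Ioc ((2 * m + 1) * p) ((2 * m + 1) * p + (2 * m + 1)), |bb m j|
        = ∑ j ∈ Finset.Ioc 0 (2 * m + 1), |bb m j| := by
      apply Finset.sum_nbij' (i := fun j => j - (2 * m + 1) * p)
        (j := fun s => s + (2 * m + 1) * p)
      · intro a ha; simp only [Finset.mem_Ioc] at ha ⊢; omega
      · intro a ha; simp only [Finset.mem_Ioc] at ha ⊢; omega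
      · intro a ha; simp only [Finset.mem_Ioc] at ha; omega
      · intro a ha; simp only [Finset.mem_Ioc] at ha; omega
      · intro j hj
        simp only [Finset.mem_Ioc] at hj
        have hrw : j = (j - (2 * m + 1) * p) + (2 * m + 1) * p := by omega
        set s := j - (2 * m + 1) * p with hs
        have hq : qq m (s + (2 * m + 1) * p) = qq m s + p := by
          unfold qq
          rw [show s + (2 * m + 1) * p + m = s + m + (2 * m + 1) * p by ring,
            Nat.add_mul_div_left _ _ (by omega : 0 < 2 * m + 1)]
        rw [hrw]
        unfold bb
        rw [hq]
        push_cast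
        ring_nf
    rw [e, block_sum]
    push_cast
    ring

lemma quantile_subset (m k : ℕ) : quantileSet m k ⊆ Finset.Icc 1 ((2 * m + 1) * k) := by
  intro l hl
  simp only [quantileSet, Finset.mem_image, Finset.mem_range] at hl
  obtain ⟨r, hr, rfl⟩ := hl
  simp only [Finset.mem_Icc]
  constructor
  · omega
  · nlinarith

end Stmt4Aux

open Stmt4Aux in
/-- Any sample different from the quantile sample has L1 statistic strictly
larger than `m(m+1)/(n(2m+1))`: the quantile sample uniquely minimizes L1. -/
theorem stmt4 (m k n : ℕ) (hm : 1 ≤ m) (hk : 1 ≤ k) (hn : n = (2 * m + 1) * k)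
    (x : ℕ → ℝ) (hx : StrictMonoOn x ↑(Finset.Icc 1 n))
    (L : Finset ℕ) (hsub : L ⊆ Finset.Icc 1 n) (hcard : L.card = k)
    (hne : L ≠ quantileSet m k) :
    L1stat n k L > ((m : ℝ) * (m + 1)) / ((n : ℝ) * (2 * m + 1)) := by
  subst hn
  set n : ℕ := (2 * m + 1) * k with hn
  have hnn : 0 < n := by positivity
  -- the integer walk
  set A : ℕ → ℤ := fun i => (i : ℤ) - ((2 * m + 1 : ℕ) : ℤ) * cnt L i with hA
  have hdvd : ∀ i, ((2 * m + 1 : ℕ) : ℤ) ∣ A i - bb m i := by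
    intro i
    refine ⟨(qq m i : ℤ) - (cnt L i : ℤ), ?_⟩
    simp only [hA, bb]
    push_cast
    ring
  have hbb : ∀ i, 2 * |bb m i| < ((2 * m + 1 : ℕ) : ℤ) := by
    intro i
    have := bb_abs_le m i
    push_cast
    omega
  have hNpos : (0 : ℤ) < ((2 * m + 1 : ℕ) : ℤ) := by positivity
  have hpt : ∀ i, |bb m i| ≤ |A i| := fun i => (abs_ge hNpos (hbb i) (hdvd i)).1
  -- existence of a strict index
  have hex : ∃ i₀ ∈ Finset.Icc 1 n, cnt L i₀ ≠ qq m i₀ := by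
    by_contra hcon
    push_neg at hcon
    apply hne
    apply set_eq_of_cnt_eq L (quantileSet m k) n hsub (quantile_subset m k)
    intro i hi
    have hi' : i ≤ (2 * m + 1) * k := (Finset.mem_Icc.mp hi).2
    rw [hcon i hi, cnt_quantile m k i hi']
  obtain ⟨i₀, hi₀, hci₀⟩ := hex
  have hstrict : |bb m i₀| + 1 ≤ |A i₀| := by
    refine (abs_ge hNpos (hbb i₀) (hdvd i₀)).2 ?_
    intro hcontra
    apply hci₀
    simp only [hA, bb] at hcontra
    push_cast at hcontra
    have hq : ((cnt L i₀ : ℤ)) = (qq m i₀ : ℤ) := by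
      have hNne : (2 * (m : ℤ) + 1) ≠ 0 := by positivity
      have h2 : (2 * (m : ℤ) + 1) * (cnt L i₀ : ℤ) = (2 * (m : ℤ) + 1) * (qq m i₀ : ℤ) := by
        linarith
      exact mul_left_cancel₀ hNne h2
    exact_mod_cast hq
  -- sum lower bound
  have hsum : (k : ℤ) * (m * (m + 1)) + 1 ≤ ∑ i ∈ Finset.Icc 1 n, |A i| := by
    have hlt : ∑ i ∈ Finset.Icc 1 n, |bb m i| < ∑ i ∈ Finset.Icc 1 n, |A i| :=
      Finset.sum_lt_sum (fun i _ => hpt i) ⟨i₀, hi₀, by have := hstrict; omega⟩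
    have heq : ∑ i ∈ Finset.Icc 1 n, |bb m i| = (k : ℤ) * (m * (m + 1)) := by
      rw [show Finset.Icc 1 n = Finset.Ioc 0 n from Finset.Icc_add_one_left_eq_Ioc 0 n]
      exact total_sum m k
    omega
  -- convert to reals
  have hnR : (0 : ℝ) < (n : ℝ) := by exact_mod_cast hnn
  have habs : ∀ i, |popCDF n i - sampCDF k L i| = (|A i| : ℝ) / n := by
    intro i
    have hk0 : (k : ℝ) ≠ 0 := by positivity
    have hn0 : (n : ℝ) ≠ 0 := ne_of_gt hnR
    have hnk : (n : ℝ) = ((2 * m + 1 : ℕ) : ℝ) * k := by rw [hn]; push_cast; ring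
    have hnk' : (n : ℝ) = (2 * (m : ℝ) + 1) * k := by rw [hn]; push_cast; ring
    have hdiff : popCDF n i - sampCDF k L i = (A i : ℝ) / n := by
      simp only [popCDF, sampCDF, hA, cnt]
      push_cast
      rw [hnk']
      field_simp
    rw [hdiff, abs_div, abs_of_pos hnR]
  have hL1 : L1stat n k L = ((∑ i ∈ Finset.Icc 1 n, |A i| : ℤ) : ℝ) / (n * n) := by
    unfold L1stat
    rw [Finset.sum_congr rfl (fun i _ => habs i), ← Finset.sum_div]
    push_cast
    field_simp
  rw [hL1]
  have htarget : ((m : ℝ) * (m + 1)) / ((n : ℝ) * (2 * m + 1))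
      = ((k : ℝ) * ((m : ℝ) * ((m : ℝ) + 1))) / (n * n) := by
    have hnk : (n : ℝ) = (2 * (m : ℝ) + 1) * k := by rw [hn]; push_cast; ring
    have h1 : (0 : ℝ) < 2 * (m : ℝ) + 1 := by positivity
    have h2 : (0 : ℝ) < (k : ℝ) := by exact_mod_cast hk
    rw [hnk]
    field_simp
  rw [gt_iff_lt, htarget]
  have hlt' : ((k : ℝ) * ((m : ℝ) * ((m : ℝ) + 1)))
      < ((∑ i ∈ Finset.Icc 1 n, |A i| : ℤ) : ℝ) := by
    have h1 : ((k : ℤ) * (m * (m + 1)) : ℤ) < ∑ i ∈ Finset.Icc 1 n, |A i| := by omega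
    calc ((k : ℝ) * ((m : ℝ) * ((m : ℝ) + 1)))
        = (((k : ℤ) * (m * (m + 1)) : ℤ) : ℝ) := by push_cast; ring
      _ < _ := by exact_mod_cast h1
  gcongr
end

section
/- Let n = (2m+1)k, and consider the quantile sample position set Q = {m+1+(2m+1)(r-1) : r = 1,...,k}. For every i ∈ {1,...,n}, |i/n - #{q ∈ Q : q ≤ i}/k| ≤ m/n. (The pointwise deviation of the quantile sample CDF from the uniform population CDF is at most m/n.) -/
/-- Pointwise deviation of the quantile-sample CDF from the uniform
population CDF is at most `m/n` at every index `i ∈ {1,…,n}`. -/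
theorem stmt6 (m k n : ℕ) (hm : 1 ≤ m) (hk : 1 ≤ k) (hn : n = (2 * m + 1) * k) :
    ∀ i ∈ Finset.Icc 1 n,
      |popCDF n i - sampCDF k (quantileSet m k) i| ≤ (m : ℝ) / n := by
  intro i hi
  simp only [Finset.mem_Icc] at hi
  set d := 2 * m + 1 with hd
  have hd0 : 0 < d := by omega
  set q := (i + m) / d with hq
  -- q ≤ k
  have hqk : q ≤ k := by
    have : i + m < (k + 1) * d := by
      have : i ≤ d * k := by omega
      nlinarith
    have ht := (Nat.div_lt_iff_lt_mul hd0).mpr this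
    exact Nat.lt_succ_iff.mp ht
  have hA : q * d ≤ i + m := Nat.div_mul_le_self (i + m) d
  have hB : i + m < (q + 1) * d := (Nat.div_lt_iff_lt_mul hd0).mp (Nat.lt_succ_self q)
  -- card of filter is q
  have hcard : ((quantileSet m k).filter (fun l => l ≤ i)).card = q := by
    have hinj : Function.Injective (fun r => m + 1 + (2 * m + 1) * r) := by
      intro a b h
      simp only at h
      exact Nat.eq_of_mul_eq_mul_left (by omega) (Nat.add_left_cancel h)
    rw [quantileSet, Finset.filter_image, Finset.card_image_of_injective _ hinj]
    have hset : (Finset.range k).filter (fun r => m + 1 + (2 * m + 1) * r ≤ i)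
        = Finset.range q := by
      ext r
      simp only [Finset.mem_filter, Finset.mem_range]
      constructor
      · rintro ⟨hrk, hle⟩
        have h1 : (r + 1) * d ≤ i + m := by nlinarith
        have := Nat.le_div_iff_mul_le hd0 |>.mpr h1
        omega
      · intro hrq
        constructor
        · omega
        · have h1 : (r + 1) * d ≤ i + m := by
            have : r + 1 ≤ q := hrq
            calc (r + 1) * d ≤ q * d := Nat.mul_le_mul_right d this
              _ ≤ i + m := hA
          nlinarith
    rw [hset, Finset.card_range]
  have hn0 : (0:ℝ) < n := by
    have : 0 < n := hn ▸ Nat.mul_pos (by omega) hk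
    exact_mod_cast this
  have hk0 : (0:ℝ) < k := by exact_mod_cast hk
  have hd0' : (0:ℝ) < d := by exact_mod_cast hd0
  have hnr : (n:ℝ) = (d:ℝ) * k := by rw [hn]; push_cast [hd]; ring
  have hqk' : (q : ℝ) / k = ((d : ℝ) * q) / n := by
    rw [hnr]
    field_simp
  have hB' : i ≤ q * d + m := by nlinarith
  have habs : |(i : ℝ) - (d : ℝ) * q| ≤ m := by
    have h1 : (q : ℝ) * d ≤ i + m := by exact_mod_cast hA
    have h2 : (i : ℝ) ≤ q * d + m := by exact_mod_cast hB'
    rw [abs_le]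
    constructor <;> [linarith; linarith]
  rw [popCDF, sampCDF, hcard, hqk', ← sub_div, abs_div, abs_of_pos hn0]
  gcongr
end

section
/- Let x_1 ≤ ... ≤ x_n be sorted reals with n = km. Among all partitions of {1,...,n} into k blocks Q_1,...,Q_k of size m, the sum of squared block means ∑_{ℓ=1}^k ((1/m)∑_{i∈Q_ℓ} x_i)² is maximized by the ordered partition Q_ℓ = {(ℓ-1)m+1,...,ℓm}. -/
/-!
Let `t_ℓ` be the block sums of the ordered partition and `s₀ ≤ ⋯ ≤ s_{k-1}` the block sums of
`Q`, sorted. Any `j` blocks of `Q` consist of `jm` distinct indices in `{1, …, n}`, so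
`t₀ + ⋯ + t_{j-1}`, the sum of the `jm` smallest values, is at most `s₀ + ⋯ + s_{j-1}`, with
equality for `j = k`. Summing `t² ≥ s² + 2s(t - s)` and applying Abel summation to
`∑ s (t - s)`, whose partial sums of `t - s` are nonpositive and whose weights `s` increase,
gives `∑ s² ≤ ∑ t²`.
-/

def orderedPartition (m k : ℕ) : Fin k → Finset ℕ :=
  fun ℓ => Finset.Icc ((ℓ : ℕ) * m + 1) (((ℓ : ℕ) + 1) * m)

open Finset

lemma sum_range_mul_nonneg_of_sum_range_nonpos {k : ℕ} {a d : ℕ → ℝ}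
    (ha : MonotoneOn a (Set.Iio k)) (hd : ∀ j ≤ k, ∑ i ∈ range j, d i ≤ 0)
    (hd_total : ∑ i ∈ range k, d i = 0) :
    0 ≤ ∑ i ∈ range k, a i * d i := by
  rw [show ∑ i ∈ range k, a i * d i = ∑ i ∈ range k, a i • d i from rfl,
    sum_range_by_parts, hd_total, smul_zero, zero_sub, neg_nonneg]
  refine sum_nonpos fun i hi => smul_nonpos_of_nonneg_of_nonpos ?_ (hd _ (by grind))
  have hi : i + 1 < k := by grind
  exact sub_nonneg.2 (ha (Set.mem_Iio.2 (by omega)) (Set.mem_Iio.2 hi) (by omega))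

lemma sum_range_sq_le_of_sum_range_le {k : ℕ} {s t : ℕ → ℝ}
    (hs : MonotoneOn s (Set.Iio k))
    (hst : ∀ j ≤ k, ∑ i ∈ range j, t i ≤ ∑ i ∈ range j, s i)
    (hst_total : ∑ i ∈ range k, t i = ∑ i ∈ range k, s i) :
    ∑ i ∈ range k, s i ^ 2 ≤ ∑ i ∈ range k, t i ^ 2 := by
  have hAbel : 0 ≤ ∑ i ∈ range k, 2 * s i * (t i - s i) := by
    refine sum_range_mul_nonneg_of_sum_range_nonpos
      (fun i hi j hj hij => by simpa using hs hi hj hij) (fun j hj => ?_) ?_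
    · simpa [sum_sub_distrib] using hst j hj
    · simp [sum_sub_distrib, hst_total]
  have htangent : ∀ i ∈ range k, s i ^ 2 + 2 * s i * (t i - s i) ≤ t i ^ 2 :=
    fun i _ => by nlinarith [sq_nonneg (t i - s i)]
  calc ∑ i ∈ range k, s i ^ 2
      ≤ ∑ i ∈ range k, (s i ^ 2 + 2 * s i * (t i - s i)) := by
        rw [sum_add_distrib]; linarith
    _ ≤ ∑ i ∈ range k, t i ^ 2 := sum_le_sum htangent

lemma sum_Icc_one_card_le_sum {M : Type*} [AddCommMonoid M] [PartialOrder M]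
    [IsOrderedAddMonoid M] {x : ℕ → M} (hx : Monotone x) (A : Finset ℕ) (hA : 0 ∉ A) :
    ∑ i ∈ Icc 1 #A, x i ≤ ∑ a ∈ A, x a := by
  induction A using Finset.induction_on_max with
  | empty => simp
  | insert a B hlt ih =>
    have haB : a ∉ B := fun h => lt_irrefl a (hlt a h)
    have hsub : insert a B ⊆ Icc 1 a := fun b hb => by
      have hb0 : b ≠ 0 := fun h => hA (h ▸ hb)
      have hba : b ≤ a := by rcases mem_insert.1 hb with rfl | hb <;> grind
      simp only [mem_Icc]; omega
    have hcard : #(insert a B) ≤ a := by simpa using card_le_card hsub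
    rw [card_insert_of_notMem haB] at hcard ⊢
    rw [sum_insert haB, sum_Icc_succ_top (by omega), add_comm]
    exact add_le_add (hx hcard) (ih (fun h => hA (mem_insert_of_mem h)))

lemma sum_range_sum_Icc_blocks {M : Type*} [AddCommMonoid M] (x : ℕ → M) (m j : ℕ) :
    ∑ ℓ ∈ range j, ∑ i ∈ Icc (ℓ * m + 1) ((ℓ + 1) * m), x i = ∑ i ∈ Icc 1 (j * m), x i := by
  induction j with
  | zero => simp
  | succ j ih =>
    have hIcc_one (b : ℕ) : Icc 1 b = Ioc 0 b := Icc_add_one_left_eq_Ioc 0 b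
    rw [sum_range_succ, ih, Icc_add_one_left_eq_Ioc, hIcc_one, hIcc_one,
      sum_Ioc_consecutive _ (Nat.zero_le _) (by gcongr; omega)]

lemma sum_Icc_le_sum_sum_of_pairwiseDisjoint {ι M : Type*} [AddCommMonoid M] [PartialOrder M]
    [IsOrderedAddMonoid M] [DecidableEq ι] {x : ℕ → M} (hx : Monotone x) {Q : ι → Finset ℕ}
    {m : ℕ} (hcard : ∀ ℓ, #(Q ℓ) = m) (hQ : ∀ ℓ, 0 ∉ Q ℓ) {I : Finset ι}
    (hdisj : (I : Set ι).PairwiseDisjoint Q) :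
    ∑ i ∈ Icc 1 (#I * m), x i ≤ ∑ ℓ ∈ I, ∑ i ∈ Q ℓ, x i := by
  rw [← sum_biUnion hdisj]
  convert sum_Icc_one_card_le_sum hx (I.biUnion Q) (by simp [hQ])
  rw [card_biUnion hdisj, sum_congr rfl fun ℓ _ => hcard ℓ, sum_const, smul_eq_mul]

lemma exists_monotoneOn_sum_range_eq_sum {α β : Type*} [LinearOrder α] [Inhabited α]
    [AddCommMonoid β] {k : ℕ} (S : Fin k → α) :
    ∃ s : ℕ → α, MonotoneOn s (Set.Iio k) ∧ ∀ j ≤ k, ∃ I : Finset (Fin k), #I = j ∧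
      ∀ f : α → β, ∑ i ∈ range j, f (s i) = ∑ ℓ ∈ I, f (S ℓ) := by
  set σ := Tuple.sort S
  let s : ℕ → α := fun i => if h : i < k then S (σ ⟨i, h⟩) else default
  have hs (i : Fin k) : s i = S (σ i) := dif_pos i.2
  refine ⟨s, fun i (hi : i < k) j (hj : j < k) hij => ?_, fun j hj => ?_⟩
  · rw [hs ⟨i, hi⟩, hs ⟨j, hj⟩]
    exact Tuple.monotone_sort S (show (⟨i, hi⟩ : Fin k) ≤ ⟨j, hj⟩ from hij)
  · refine ⟨univ.map ((Fin.castLEEmb hj).trans σ.toEmbedding), by simp, fun f => ?_⟩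
    rw [sum_map, ← Fin.sum_univ_eq_sum_range fun i => f (s i)]
    exact sum_congr rfl fun i _ => congrArg f (hs (Fin.castLE hj i))

theorem stmt12_general (m k n : ℕ) (hn : n = k * m)
    (x : ℕ → ℝ) (hx : Monotone x)
    (Q : Fin k → Finset ℕ)
    (hdisj : ∀ i j, i ≠ j → Disjoint (Q i) (Q j))
    (hcard : ∀ i, (Q i).card = m)
    (hcover : Finset.univ.biUnion Q = Finset.Icc 1 n) :
    ∑ ℓ : Fin k, ((1 / (m : ℝ)) * ∑ i ∈ Q ℓ, x i) ^ 2 ≤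
      ∑ ℓ : Fin k, ((1 / (m : ℝ)) * ∑ i ∈ orderedPartition m k ℓ, x i) ^ 2 := by
  classical
  obtain ⟨s, hs, hs_sum⟩ := exists_monotoneOn_sum_range_eq_sum (β := ℝ) fun ℓ => ∑ i ∈ Q ℓ, x i
  set t : ℕ → ℝ := fun ℓ => ∑ i ∈ Icc (ℓ * m + 1) ((ℓ + 1) * m), x i
  have hQ : ∀ ℓ, 0 ∉ Q ℓ := fun ℓ h0 => by
    have : 0 ∈ Icc 1 n := hcover ▸ mem_biUnion.2 ⟨ℓ, mem_univ ℓ, h0⟩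
    simp at this
  have hprefix : ∀ j ≤ k, ∑ i ∈ range j, t i ≤ ∑ i ∈ range j, s i := fun j hj => by
    obtain ⟨I, rfl, hI⟩ := hs_sum j hj
    rw [sum_range_sum_Icc_blocks, hI fun y => y]
    exact sum_Icc_le_sum_sum_of_pairwiseDisjoint hx hcard hQ fun a _ b _ hab => hdisj a b hab
  obtain ⟨I, hI_card, hI⟩ := hs_sum k le_rfl
  obtain rfl : I = univ := eq_univ_of_card I (by simpa using hI_card)
  have htotal : ∑ i ∈ range k, t i = ∑ i ∈ range k, s i := by
    rw [sum_range_sum_Icc_blocks, ← hn, hI fun y => y, ← hcover,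
      sum_biUnion fun a _ b _ hab => hdisj a b hab]
  have hsq := sum_range_sq_le_of_sum_range_le hs hprefix htotal
  rw [hI (· ^ 2), ← Fin.sum_univ_eq_sum_range (fun i => t i ^ 2)] at hsq
  simp only [mul_pow, ← mul_sum]
  exact mul_le_mul_of_nonneg_left hsq (by positivity)

/-- For sorted reals `x_1 ≤ … ≤ x_n`, `n = km`, among all partitions of
`{1,…,n}` into `k` blocks of size `m`, the sum of squared block means is
maximized by the ordered (consecutive-blocks) partition. -/
theorem stmt12 (m k n : ℕ) (hm : 1 ≤ m) (hk : 1 ≤ k) (hn : n = k * m)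
    (x : ℕ → ℝ) (hx : Monotone x)
    (Q : Fin k → Finset ℕ)
    (hdisj : ∀ i j, i ≠ j → Disjoint (Q i) (Q j))
    (hcard : ∀ i, (Q i).card = m)
    (hcover : Finset.univ.biUnion Q = Finset.Icc 1 n) :
    ∑ ℓ : Fin k, ((1 / (m : ℝ)) * ∑ i ∈ Q ℓ, x i) ^ 2 ≤
      ∑ ℓ : Fin k, ((1 / (m : ℝ)) * ∑ i ∈ orderedPartition m k ℓ, x i) ^ 2 :=
  stmt12_general m k n hn x hx Q hdisj hcard hcover
end

section
/- Let n = (2m+1)k and let L ⊆ {1,...,n} with |L| = k be such that for some r ≥ 1, the r smallest elements of L are exactly m+1, m+1+(2m+1), ..., m+1+(2m+1)(r-1), but the (r+1)-th smallest element ℓ_{r+1} ≠ m+1+(2m+1)r. Then max_{1≤i≤n} |i/n - #{ℓ∈L : ℓ≤i}/k| > m/n. -/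
lemma count_filter_le (k : ℕ) (L : Finset ℕ) (hcard : L.card = k) (i j : ℕ) (hj : j ≤ k)
    (h1 : ∀ s : Fin k, (s : ℕ) < j → ((L.orderIsoOfFin hcard s : ℕ)) ≤ i)
    (h2 : ∀ s : Fin k, j ≤ (s : ℕ) → i < (L.orderIsoOfFin hcard s : ℕ)) :
    (L.filter (fun l => l ≤ i)).card = j := by
  classical
  rw [← Finset.card_range j]
  apply Finset.card_bij
    (fun l hl => ((L.orderIsoOfFin hcard).symm ⟨l, (Finset.mem_filter.mp hl).1⟩ : ℕ))
  · intro l hl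
    rw [Finset.mem_range]
    by_contra hge
    push_neg at hge
    have := h2 _ hge
    simp only [OrderIso.apply_symm_apply] at this
    exact absurd (Finset.mem_filter.mp hl).2 (not_le.mpr this)
  · intro a ha b hb hab
    have := (L.orderIsoOfFin hcard).symm.injective (Fin.val_injective hab)
    exact congrArg Subtype.val this
  · intro t ht
    rw [Finset.mem_range] at ht
    refine ⟨(L.orderIsoOfFin hcard ⟨t, ht.trans_le hj⟩ : ℕ), ?_, ?_⟩
    · exact Finset.mem_filter.mpr ⟨(L.orderIsoOfFin hcard _).2, h1 _ ht⟩
    · exact congrArg Fin.val ((L.orderIsoOfFin hcard).symm_apply_apply _)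

/-- Inductive step for KS-uniqueness: if the `r` smallest selected positions
are exactly the first `r` quantile positions `m+1+(2m+1)s`, `s < r`, but the
`(r+1)`-th smallest position differs from `m+1+(2m+1)r`, then the KS deviation
exceeds `m/n`. -/
theorem stmt17 (m k n : ℕ) (hm : 1 ≤ m) (hk : 1 ≤ k) (hn : n = (2 * m + 1) * k)
    (L : Finset ℕ) (hsub : L ⊆ Finset.Icc 1 n) (hcard : L.card = k)
    (r : ℕ) (hr1 : 1 ≤ r) (hrk : r < k)
    (hagree : ∀ s : Fin k, (s : ℕ) < r →
      (L.orderIsoOfFin hcard s).val = m + 1 + (2 * m + 1) * (s : ℕ))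
    (hdiff : (L.orderIsoOfFin hcard ⟨r, hrk⟩).val ≠ m + 1 + (2 * m + 1) * r) :
    ∃ i ∈ Finset.Icc 1 n, |popCDF n i - sampCDF k L i| > (m : ℝ) / n := by
  classical
  set e := L.orderIsoOfFin hcard with he
  set ℓ : ℕ := (e ⟨r, hrk⟩ : ℕ) with hℓ
  have hmono : ∀ s t : Fin k, s < t → (e s : ℕ) < (e t : ℕ) := by
    intro s t hst
    exact Subtype.coe_lt_coe.mpr (e.strictMono hst)
  have hℓmem : ℓ ∈ L := (e ⟨r, hrk⟩).2
  have hℓIcc := hsub hℓmem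
  rw [Finset.mem_Icc] at hℓIcc
  have hn0 : (0:ℝ) < n := by
    have : 0 < n := by rw [hn]; positivity
    exact_mod_cast this
  have hk0 : (0:ℝ) < k := by exact_mod_cast hk
  have hcast : (n:ℝ) = (2*m+1)*k := by rw [hn]; push_cast; ring
  rcases lt_or_gt_of_ne hdiff with hlt | hgt
  -- Case 1: ℓ < m+1+(2m+1)r, take i = ℓ, count = r+1
  · refine ⟨ℓ, Finset.mem_Icc.mpr hℓIcc, ?_⟩
    have hcount : (L.filter (fun l => l ≤ ℓ)).card = r + 1 := by
      apply count_filter_le k L hcard ℓ (r+1) hrk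
      · intro s hs
        rcases lt_or_eq_of_le (Nat.lt_succ_iff.mp hs) with h | h
        · exact (hmono s ⟨r, hrk⟩ (by simpa [Fin.lt_def] using h)).le
        · have : s = ⟨r, hrk⟩ := Fin.ext h
          rw [this]
      · intro s hs
        exact hmono ⟨r, hrk⟩ s (by simpa [Fin.lt_def] using hs)
    have hA : ℓ + (m+1) ≤ (2*m+1)*(r+1) := by
      have hexp : (2*m+1)*(r+1) = (2*m+1)*r + (2*m+1) := by ring
      rw [hexp]
      set A := (2*m+1)*r with hAdef
      omega
    have hAR : (ℓ:ℝ) + ((m:ℝ)+1) ≤ ((2*m+1)*(r+1) : ℝ) := by exact_mod_cast hA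
    have hsamp : sampCDF k L ℓ = ((2*m+1)*(r+1) : ℝ) / n := by
      rw [sampCDF, hcount, hcast]
      push_cast
      field_simp
    rw [popCDF, hsamp]
    have key : ((m:ℝ)+1)/n ≤ ((2*m+1)*(r+1) : ℝ)/n - (ℓ:ℝ)/n := by
      rw [div_sub_div_same]
      gcongr
      linarith
    have habs : ((m:ℝ)+1)/n ≤ |(ℓ:ℝ)/n - ((2*m+1)*(r+1) : ℝ)/n| := by
      rw [abs_sub_comm]
      exact key.trans (le_abs_self _)
    have : (m:ℝ)/n < ((m:ℝ)+1)/n := by gcongr; linarith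
    exact lt_of_lt_of_le this habs
  -- Case 2: ℓ > m+1+(2m+1)r, take i = ℓ-1, count = r
  · have hℓ2 : 2 ≤ ℓ := by omega
    refine ⟨ℓ - 1, Finset.mem_Icc.mpr ⟨by omega, by omega⟩, ?_⟩
    have hcount : (L.filter (fun l => l ≤ ℓ - 1)).card = r := by
      apply count_filter_le k L hcard (ℓ-1) r hrk.le
      · intro s hs
        have := hmono s ⟨r, hrk⟩ (by simpa [Fin.lt_def] using hs)
        show (e s : ℕ) ≤ ℓ - 1
        omega
      · intro s hs
        show ℓ - 1 < (e s : ℕ)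
        have : ℓ ≤ (e s : ℕ) := by
          rcases eq_or_lt_of_le hs with h | h
          · have : s = ⟨r, hrk⟩ := Fin.ext h.symm
            rw [this]
          · exact (hmono ⟨r, hrk⟩ s (by simpa [Fin.lt_def] using h)).le
        omega
    have hA : (2*m+1)*r + (m+1) ≤ ℓ - 1 := by
      set A := (2*m+1)*r with hAdef
      omega
    have hAR : ((2*m+1)*r : ℝ) + ((m:ℝ)+1) ≤ ((ℓ-1 : ℕ):ℝ) := by exact_mod_cast hA
    have hsamp : sampCDF k L (ℓ-1) = ((2*m+1)*r : ℝ) / n := by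
      rw [sampCDF, hcount, hcast]
      push_cast
      field_simp
    rw [popCDF, hsamp]
    have key : ((m:ℝ)+1)/n ≤ ((ℓ-1:ℕ):ℝ)/n - ((2*m+1)*r : ℝ)/n := by
      rw [div_sub_div_same]
      gcongr
      linarith
    have habs : ((m:ℝ)+1)/n ≤ |((ℓ-1:ℕ):ℝ)/n - ((2*m+1)*r : ℝ)/n| :=
      key.trans (le_abs_self _)
    have : (m:ℝ)/n < ((m:ℝ)+1)/n := by gcongr; linarith
    exact lt_of_lt_of_le this habs
end

section
/- Let n = (2m+1)k, x_1 < ... < x_n strictly increasing, with quantile positions q_r = m+1+(2m+1)(r-1). Suppose a sample y' has position set L = {ℓ_1 < ... < ℓ_k} agreeing with the quantile positions in the first i coordinates and ℓ_{i+1} > q_{i+1}. Let ℓ = ℓ_{i+1} - 1, and let y'' be the sample with position set (L \ {ℓ_{i+1}}) ∪ {ℓ} (assuming ℓ ∉ L). Then L1(x,y'') < L1(x,y'), where L1(x,y) = (1/n)∑_{i=1}^n |i/n - F_y(x_i)|. -/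
/-!
Moving the position `a = ℓ_{i+1}` of the sample down to the free position `a - 1` raises the
sample CDF by `1/k` at the single index `a - 1` and leaves it unchanged elsewhere. Before the move
the sample CDF there equals `i/k`, since exactly `i` positions lie below `ℓ_{i+1}`; because
`a - 1` is at or beyond the quantile position `m + 1 + (2m+1)i`, the population CDF
`(a-1)/n` exceeds the midpoint `(2i+1)/(2k)` of `i/k` and `(i+1)/k`, so that term of the
L1 sum strictly decreases.
-/

open Finset

theorem Finset.card_filter_lt_orderEmbOfFin {α : Type*} [LinearOrder α] (s : Finset α) {k : ℕ}
    (h : s.card = k) (j : Fin k) : #{a ∈ s | a < s.orderEmbOfFin h j} = j := by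
  have hfilter :
      {a ∈ s | a < s.orderEmbOfFin h j} = (Iio j).map (s.orderEmbOfFin h).toEmbedding := by
    ext a
    simp only [mem_filter, mem_map, mem_Iio, RelEmbedding.coe_toEmbedding]
    constructor
    · rintro ⟨ha, hlt⟩
      obtain ⟨t, rfl⟩ : a ∈ Set.range (s.orderEmbOfFin h) := by
        rwa [range_orderEmbOfFin]
      exact ⟨t, (s.orderEmbOfFin h).lt_iff_lt.mp hlt, rfl⟩
    · rintro ⟨t, ht, rfl⟩
      exact ⟨orderEmbOfFin_mem s h t, (s.orderEmbOfFin h).lt_iff_lt.mpr ht⟩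
  rw [hfilter, card_map, Fin.card_Iio]

theorem Finset.card_filter_le_insert_erase {α : Type*} [LinearOrder α] {s : Finset α} {a b : α}
    (ha : a ∈ s) (hb : b ∉ s) (hba : b < a) (j : α) :
    #{l ∈ insert b (s.erase a) | l ≤ j} =
      #{l ∈ s | l ≤ j} + if b ≤ j ∧ j < a then 1 else 0 := by
  have hb' : b ∉ {l ∈ s | l ≤ j} := fun h => hb (mem_filter.mp h).1
  rw [filter_insert, filter_erase]
  by_cases hbj : b ≤ j
  · by_cases haj : a ≤ j
    · have ha' : a ∈ {l ∈ s | l ≤ j} := mem_filter.mpr ⟨ha, haj⟩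
      have hpos := card_pos.mpr ⟨a, ha'⟩
      rw [if_pos hbj, if_neg (fun h => not_lt.mpr haj h.2),
        card_insert_of_notMem (fun h => hb' (mem_of_mem_erase h)), card_erase_of_mem ha']
      omega
    · rw [if_pos hbj, if_pos ⟨hbj, not_le.mp haj⟩,
        erase_eq_of_notMem (show a ∉ {l ∈ s | l ≤ j} from fun h => haj (mem_filter.mp h).2),
        card_insert_of_notMem hb']
  · rw [if_neg hbj, if_neg (fun h => hbj h.1),
      erase_eq_of_notMem
        (show a ∉ {l ∈ s | l ≤ j} from fun h => hbj (hba.le.trans (mem_filter.mp h).2)),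
      add_zero]

theorem sampCDF_insert_erase {L : Finset ℕ} {a b : ℕ} (ha : a ∈ L) (hb : b ∉ L) (hba : b < a)
    (k j : ℕ) :
    sampCDF k (insert b (L.erase a)) j =
      sampCDF k L j + if j ∈ Ico b a then (1 / k : ℝ) else 0 := by
  unfold sampCDF
  rw [card_filter_le_insert_erase ha hb hba]
  by_cases hj : j ∈ Ico b a
  · rw [if_pos (mem_Ico.mp hj), if_pos hj]
    push_cast
    ring
  · rw [if_neg (mt mem_Ico.mpr hj), if_neg hj]
    simp

theorem L1stat_insert_erase_lt {n k : ℕ} {L : Finset ℕ} {a b : ℕ} (ha : a ∈ L) (hb : b ∉ L)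
    (hba : b < a) (hbn : b ∈ Icc 1 n)
    (hcloser : ∀ j ∈ Ico b a,
      |popCDF n j - (sampCDF k L j + 1 / k)| < |popCDF n j - sampCDF k L j|) :
    L1stat n k (insert b (L.erase a)) < L1stat n k L := by
  have hn : (0 : ℝ) < n := by
    have := mem_Icc.mp hbn
    exact_mod_cast (show 0 < n by omega)
  have hbIco : b ∈ Ico b a := mem_Ico.mpr ⟨le_rfl, hba⟩
  unfold L1stat
  refine mul_lt_mul_of_pos_left (sum_lt_sum (fun j _ => ?_) ⟨b, hbn, ?_⟩) (by positivity)
  · rw [sampCDF_insert_erase ha hb hba]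
    split_ifs with hj
    · exact (hcloser j hj).le
    · rw [add_zero]
  · rw [sampCDF_insert_erase ha hb hba, if_pos hbIco]
    exact hcloser b hbIco

theorem abs_sub_lt_abs_sub_of_add_lt_two_mul {x p q : ℝ} (hpq : p < q) (h : p + q < 2 * x) :
    |x - q| < |x - p| := by
  rw [abs_of_pos (by linarith : 0 < x - p), abs_lt]
  constructor <;> linarith

theorem abs_popCDF_sub_lt {m k n i j : ℕ} (hn : n = (2 * m + 1) * k) (hk : 0 < k)
    (hj : (2 * m + 1) * (2 * i + 1) < 2 * j) :
    |popCDF n j - ((i : ℝ) / k + 1 / k)| < |popCDF n j - (i : ℝ) / k| := by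
  have hk' : (0 : ℝ) < k := by exact_mod_cast hk
  have hj' : ((2 * m + 1) * (2 * i + 1) : ℝ) < 2 * j := by exact_mod_cast hj
  apply abs_sub_lt_abs_sub_of_add_lt_two_mul (by simp [hk'])
  rw [popCDF, hn, ← add_assoc, ← add_div, ← add_div, mul_div_assoc',
    div_lt_div_iff₀ hk' (by positivity)]
  push_cast
  nlinarith

theorem stmt19_general (m k n : ℕ) (hn : n = (2 * m + 1) * k)
    (L : Finset ℕ) (hsub : L ⊆ Finset.Icc 1 n) (hcard : L.card = k)
    (i : ℕ) (hik : i < k)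
    (hgt : m + 1 + (2 * m + 1) * i < (L.orderIsoOfFin hcard ⟨i, hik⟩).val)
    (hnotmem : (L.orderIsoOfFin hcard ⟨i, hik⟩).val - 1 ∉ L) :
    L1stat n k
        (insert ((L.orderIsoOfFin hcard ⟨i, hik⟩).val - 1)
          (L.erase ((L.orderIsoOfFin hcard ⟨i, hik⟩).val))) <
      L1stat n k L := by
  rw [coe_orderIsoOfFin_apply] at *
  set a := L.orderEmbOfFin hcard ⟨i, hik⟩
  have haL : a ∈ L := orderEmbOfFin_mem L hcard _
  have han : a ≤ n := (mem_Icc.mp (hsub haL)).2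
  have hbelow : sampCDF k L (a - 1) = i / k := by
    rw [sampCDF, filter_congr (fun l _ => show l ≤ a - 1 ↔ l < a by omega),
      card_filter_lt_orderEmbOfFin]
  refine L1stat_insert_erase_lt haL hnotmem (by omega) (mem_Icc.mpr ⟨by omega, by omega⟩) ?_
  intro j hj
  obtain rfl : j = a - 1 := by rw [mem_Ico] at hj; omega
  rw [hbelow]
  have hexpand : (2 * m + 1) * (2 * i + 1) = 2 * ((2 * m + 1) * i) + 2 * m + 1 := by ring
  exact abs_popCDF_sub_lt hn (by omega) (by omega)

/-- Exchange step in the proof of L1-optimality: if the position set `L`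
agrees with the quantile positions in its first `i` coordinates and its
`(i+1)`-th smallest position exceeds the quantile position `m+1+(2m+1)i`,
then replacing that position by the next lower position strictly decreases
the L1 statistic. -/
theorem stmt19 (m k n : ℕ) (hm : 1 ≤ m) (hk : 1 ≤ k) (hn : n = (2 * m + 1) * k)
    (x : ℕ → ℝ) (hx : StrictMonoOn x ↑(Finset.Icc 1 n))
    (L : Finset ℕ) (hsub : L ⊆ Finset.Icc 1 n) (hcard : L.card = k)
    (i : ℕ) (hik : i < k)
    (hagree : ∀ s : Fin k, (s : ℕ) < i →
      (L.orderIsoOfFin hcard s).val = m + 1 + (2 * m + 1) * (s : ℕ))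
    (hgt : m + 1 + (2 * m + 1) * i < (L.orderIsoOfFin hcard ⟨i, hik⟩).val)
    (hnotmem : (L.orderIsoOfFin hcard ⟨i, hik⟩).val - 1 ∉ L) :
    L1stat n k
        (insert ((L.orderIsoOfFin hcard ⟨i, hik⟩).val - 1)
          (L.erase ((L.orderIsoOfFin hcard ⟨i, hik⟩).val))) <
      L1stat n k L :=
  stmt19_general m k n hn L hsub hcard i hik hgt hnotmem
end
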